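/- Let n and d be positive integers, let φ : ℤ_{≥0} → ℕ be any function, and let I ⊆ V be a homogeneous ideal with dim_ℂ (V/I)_a = φ(a) for all a ≥ 0. Then Υ(I) is a ℤ^d-homogeneous ideal of S and dim_ℂ (S/Υ(I))_u = φ(|u|) for all u ∈ ℤ^d_{≥0}. -/

import Mathlib

/-!
Common setup, following the paper "On the abundance of minimal border rank symmetric
tensors verifying Comon's conjecture".

* `S = ℂ[α_{i,j} : 1 ≤ i ≤ d, 1 ≤ j ≤ n]` is modeled as `MvPolynomial (Fin d × Fin n) ℂ`,
  with the `ℤ^d`-grading in which `deg α_{i,j} = e_i`; `Scomp n d u` is the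
  multidegree-`u` component (`u : Fin d → ℕ`).
* `V = ℂ[β_1,…,β_n]` is modeled as `MvPolynomial (Fin n) ℂ` with its standard grading;
  `Vcomp n N` is the degree-`N` component.
* The graded duals `T` and `P` are modeled by the same polynomial rings, with `S`
  (resp. `V`) acting by differentiation (`apolar`); `ann F` is the apolar
  (annihilator) ideal of `F`.
* A tensor `F ∈ (ℂ^n)^{⊗d}` is an element of the multidegree-`(1,…,1)` component
  `Scomp n d (fun _ => 1)` (a multilinear form in the `x_{i,j}`).
-/

open MvPolynomial Submodule Module

noncomputable section

namespace BorderComon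

/-- the multidegree-`u` graded component of `S`. -/
def Scomp (n d : ℕ) (u : Fin d → ℕ) : Submodule ℂ (MvPolynomial (Fin d × Fin n) ℂ) :=
  weightedHomogeneousSubmodule ℂ (fun p : Fin d × Fin n => Pi.single p.1 1) u

/-- the degree-`N` graded component of `V`. -/
def Vcomp (n : ℕ) (N : ℕ) : Submodule ℂ (MvPolynomial (Fin n) ℂ) :=
  homogeneousSubmodule (Fin n) ℂ N

/-- the diagonal ring map `π : S → V`, `α_{i,j} ↦ β_j`. -/
def piAlg (n d : ℕ) : MvPolynomial (Fin d × Fin n) ℂ →ₐ[ℂ] MvPolynomial (Fin n) ℂ :=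
  aeval (fun p : Fin d × Fin n => X p.2)

/-- `π` as a `ℂ`-linear map. -/
def piL (n d : ℕ) : MvPolynomial (Fin d × Fin n) ℂ →ₗ[ℂ] MvPolynomial (Fin n) ℂ :=
  (piAlg n d).toLinearMap

/-- the ring map `ρ : S → V`, `α_{1,j} ↦ β_j` and `α_{i,j} ↦ 0` for `i ≥ 2`
(rows are `0`-indexed, so the first row is row `0`). -/
def rho (n d : ℕ) : MvPolynomial (Fin d × Fin n) ℂ →ₐ[ℂ] MvPolynomial (Fin n) ℂ :=
  aeval (fun p : Fin d × Fin n => if (p.1 : ℕ) = 0 then X p.2 else 0)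

/-- the result of differentiating `F` by the monomial `X^a`:
`∂^a X^b = (∏_i b_i!/(b_i-a_i)!) X^{b-a}` (and `= 0` unless `a ≤ b`, which is
automatic since the descending factorial vanishes there). -/
def diffMon {σ : Type*} (a : σ →₀ ℕ) (F : MvPolynomial σ ℂ) : MvPolynomial σ ℂ :=
  ∑ b ∈ F.support, (F.coeff b * ∏ i ∈ a.support, ((b i).descFactorial (a i) : ℂ)) •
    monomial (b - a) (1 : ℂ)

/-- the apolarity action: `apolar F ψ = ψ ∘ F` is the result of letting `ψ` act on `F`
by differentiation, linearly in `ψ`. -/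
def apolar {σ : Type*} (F : MvPolynomial σ ℂ) : MvPolynomial σ ℂ →ₗ[ℂ] MvPolynomial σ ℂ :=
  Finsupp.lsum ℂ (fun a : σ →₀ ℕ => LinearMap.toSpanSingleton ℂ _ (diffMon a F)) ∘ₗ
    (AddMonoidAlgebra.coeffLinearEquiv ℂ).toLinearMap

/-- the apolar (annihilator) ideal `Ann(F) = {ψ : ψ ∘ F = 0}`, as a subspace. -/
def ann {σ : Type*} (F : MvPolynomial σ ℂ) : Submodule ℂ (MvPolynomial σ ℂ) :=
  LinearMap.ker (apolar F)

/-- the ideal `I_R ⊆ S` generated by the `2×2` minors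
`α_{i,j} α_{k,ℓ} − α_{i,ℓ} α_{k,j}`, `i < k`, `j < ℓ`. -/
def IR (n d : ℕ) : Ideal (MvPolynomial (Fin d × Fin n) ℂ) :=
  Ideal.span {q | ∃ i k : Fin d, ∃ j l : Fin n, i < k ∧ j < l ∧
    q = X (i, j) * X (k, l) - X (i, l) * X (k, j)}

/-- `J ⊆ S` is a (multigraded) homogeneous ideal: it is the sum of its
multigraded components. -/
def IsHomogS (n d : ℕ) (J : Ideal (MvPolynomial (Fin d × Fin n) ℂ)) : Prop :=
  Submodule.restrictScalars ℂ J = ⨆ u : Fin d → ℕ, (Submodule.restrictScalars ℂ J ⊓ Scomp n d u)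

/-- `I ⊆ V` is a homogeneous ideal: it is the sum of its graded components. -/
def IsHomogV (n : ℕ) (I : Ideal (MvPolynomial (Fin n) ℂ)) : Prop :=
  Submodule.restrictScalars ℂ I = ⨆ N : ℕ, (Submodule.restrictScalars ℂ I ⊓ Vcomp n N)

/-- the exponent redistribution underlying `ψ_u`: in the sorted list
`i_1 ≤ ⋯ ≤ i_N` of the indices of the monomial `β^γ` (value `j` occurring `γ j`
times, `N = |γ|`), row `i` receives the block of positions
`[∑_{i'<i} u i', ∑_{i'≤i} u i')`, while value `j` occupies positions
`[∑_{j'<j} γ j', ∑_{j'≤j} γ j')`; hence the exponent of `α_{i,j}` is the size of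
the intersection of these two intervals. -/
def distrib (n d : ℕ) (u : Fin d → ℕ) (γ : Fin n →₀ ℕ) : (Fin d × Fin n) →₀ ℕ :=
  Finsupp.equivFunOnFinite.symm fun p : Fin d × Fin n =>
    min (∑ i ∈ Finset.univ.filter fun i : Fin d => (i : ℕ) ≤ (p.1 : ℕ), u i)
        (∑ j ∈ Finset.univ.filter fun j : Fin n => (j : ℕ) ≤ (p.2 : ℕ), γ j)
    - max (∑ i ∈ Finset.univ.filter fun i : Fin d => (i : ℕ) < (p.1 : ℕ), u i)
          (∑ j ∈ Finset.univ.filter fun j : Fin n => (j : ℕ) < (p.2 : ℕ), γ j)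

/-- the linear map `ψ_u : V → S` sending a monomial `β_{i_1} β_{i_2} ⋯ β_{i_N}`
with `i_1 ≤ i_2 ≤ ⋯ ≤ i_N` to
`(α_{1,i_1} ⋯ α_{1,i_{u_1}}) (α_{2,i_{u_1+1}} ⋯ α_{2,i_{u_1+u_2}}) ⋯`.
(Its restriction to `Vcomp n (∑ i, u i)` is the map `ψ_u : V_{|u|} → S_u` of the
paper.) -/
def psi (n d : ℕ) (u : Fin d → ℕ) :
    MvPolynomial (Fin n) ℂ →ₗ[ℂ] MvPolynomial (Fin d × Fin n) ℂ :=
  (AddMonoidAlgebra.coeffLinearEquiv ℂ).symm.toLinearMap ∘ₗ Finsupp.lmapDomain ℂ ℂ (distrib n d u) ∘ₗ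
    (AddMonoidAlgebra.coeffLinearEquiv ℂ).toLinearMap

/-- `Υ(I) = I_R + ∑_{u} ψ_u(I_{|u|}) ⊆ S`. -/
def Upsilon (n d : ℕ) (I : Ideal (MvPolynomial (Fin n) ℂ)) :
    Submodule ℂ (MvPolynomial (Fin d × Fin n) ℂ) :=
  restrictScalars ℂ (IR n d) ⊔
    ⨆ u : Fin d → ℕ, Submodule.map (psi n d u) (restrictScalars ℂ I ⊓ Vcomp n (∑ i, u i))

/-- the irrelevant ideal `B_X = ∏_{i=1}^d (α_{i,1},…,α_{i,n}) ⊆ S`. -/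
def BX (n d : ℕ) : Ideal (MvPolynomial (Fin d × Fin n) ℂ) :=
  ∏ i : Fin d, Ideal.span (Set.range fun j : Fin n => X (i, j))

/-- the irrelevant ideal `B_Y = (β_1,…,β_n) ⊆ V`. -/
def BY (n : ℕ) : Ideal (MvPolynomial (Fin n) ℂ) :=
  Ideal.span (Set.range X)

/-- `Σ(J) = ⊕_{a ≥ 0} ⊕_{s ∈ ℰ} π(J_{a𝟏+s}) ⊆ V`, where
`ℰ = {0, e_1, e_1+e_2, …, e_1+⋯+e_{d-1}}` (the element `s` with `m` ones is
`fun i => if i < m then 1 else 0`). -/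
def SigmaMap (n d : ℕ) (J : Ideal (MvPolynomial (Fin d × Fin n) ℂ)) :
    Submodule ℂ (MvPolynomial (Fin n) ℂ) :=
  ⨆ a : ℕ, ⨆ m : Fin d, Submodule.map (piL n d)
    (restrictScalars ℂ J ⊓ Scomp n d (fun i => a + if (i : ℕ) < (m : ℕ) then 1 else 0))

/-- the set of tensors of rank at most `r`: sums of `r` decomposable tensors
`v_1 ⊗ ⋯ ⊗ v_d = ∏_i (∑_j v_i(j) x_{i,j})`. -/
def rankLE (n d r : ℕ) : Set (MvPolynomial (Fin d × Fin n) ℂ) :=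
  {F | ∃ v : Fin r → Fin d → Fin n → ℂ,
    F = ∑ s : Fin r, ∏ i : Fin d, ∑ j : Fin n, C (v s i j) * X (i, j)}

/-- `F` has border rank at most `r`: coefficientwise (finitely many coefficients are
involved), `F` lies in the closure of the set of tensors of rank at most `r`. -/
def brkLE (n d : ℕ) (F : MvPolynomial (Fin d × Fin n) ℂ) (r : ℕ) : Prop :=
  (fun m => coeff m F) ∈ closure ((fun G => fun m => coeff m G) '' rankLE n d r)

/-- the border rank of a tensor. -/
def brk (n d : ℕ) (F : MvPolynomial (Fin d × Fin n) ℂ) : ℕ :=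
  sInf {r | brkLE n d F r}

/-- polynomials that are sums of `r` `d`-th powers of linear forms. -/
def srankLE (n d r : ℕ) : Set (MvPolynomial (Fin n) ℂ) :=
  {p | ∃ c : Fin r → Fin n → ℂ, p = ∑ s : Fin r, (∑ j : Fin n, C (c s j) * X j) ^ d}

/-- `p` has symmetric border rank at most `r`. -/
def sbrkLE (n d : ℕ) (p : MvPolynomial (Fin n) ℂ) (r : ℕ) : Prop :=
  (fun m => coeff m p) ∈ closure ((fun q => fun m => coeff m q) '' srankLE n d r)

/-- the symmetric border rank of a degree-`d` form. -/
def sbrk (n d : ℕ) (p : MvPolynomial (Fin n) ℂ) : ℕ :=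
  sInf {r | sbrkLE n d p r}

/-- `F` is a symmetric tensor: invariant under the permutations of the `d` factors. -/
def IsSymm (n d : ℕ) (F : MvPolynomial (Fin d × Fin n) ℂ) : Prop :=
  ∀ τ : Equiv.Perm (Fin d), rename (Prod.map τ id) F = F

/-- the degree-`d` polynomial `p_F` corresponding to a symmetric tensor `F`, obtained
by identifying all the rows of variables (`x_{i,j} ↦ y_j`); `F` is the polarization
of `p_F`. -/
def pF (n d : ℕ) (F : MvPolynomial (Fin d × Fin n) ℂ) : MvPolynomial (Fin n) ℂ :=
  rename Prod.snd F

/-- `F` is concise: the contraction `(ℂ^n)^* → (ℂ^n)^{⊗(d-1)}` of the first tensor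
factor, `w ↦ F(x_{1,j} := w_j)`, is injective. -/
def Concise (n d : ℕ) (F : MvPolynomial (Fin d × Fin n) ℂ) : Prop :=
  Function.Injective fun w : Fin n → ℂ =>
    aeval (fun p : Fin d × Fin n => if (p.1 : ℕ) = 0 then C (w p.2) else X p) F

/-- the ideal `∑_{0<u<𝟏} S·Ann(F)_u` generated by the components `Ann(F)_u`,
`0 < u < 𝟏` (componentwise). -/
def midIdeal (n d : ℕ) (F : MvPolynomial (Fin d × Fin n) ℂ) :
    Ideal (MvPolynomial (Fin d × Fin n) ℂ) :=
  Ideal.span (⋃ u ∈ {u : Fin d → ℕ | 0 < u ∧ u < fun _ => 1},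
    ((ann F ⊓ Scomp n d u : Submodule ℂ (MvPolynomial (Fin d × Fin n) ℂ)) :
      Set (MvPolynomial (Fin d × Fin n) ℂ)))

/-- `F` is a *sharp* tensor:
(1) `Ann(F)` has exactly `n-1` minimal generators of multidegree `𝟏`;
(2) `dim (S/Ann F)_u = n` for all `0 < u < 𝟏`;
(3) `dim (S/(Ann(F)_{e_i+e_j}))_{s e_i + e_j} = n` for all `i ≠ j`, `1 ≤ s ≤ d-1`. -/
def Sharp (n d : ℕ) (F : MvPolynomial (Fin d × Fin n) ℂ) : Prop :=
  (finrank ℂ (ann F ⊓ Scomp n d fun _ => 1 :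
        Submodule ℂ (MvPolynomial (Fin d × Fin n) ℂ)) -
      finrank ℂ (restrictScalars ℂ (midIdeal n d F) ⊓ Scomp n d fun _ => 1 :
        Submodule ℂ (MvPolynomial (Fin d × Fin n) ℂ)) = n - 1) ∧
  (∀ u : Fin d → ℕ, 0 < u → u < (fun _ => 1) →
    finrank ℂ (Scomp n d u ⧸ Submodule.comap (Scomp n d u).subtype (ann F)) = n) ∧
  (∀ i j : Fin d, i ≠ j → ∀ s : ℕ, 1 ≤ s → s ≤ d - 1 →
    finrank ℂ (Scomp n d (Pi.single i s + Pi.single j 1) ⧸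
      Submodule.comap (Scomp n d (Pi.single i s + Pi.single j 1)).subtype
        (restrictScalars ℂ (Ideal.span
          ((ann F ⊓ Scomp n d (Pi.single i 1 + Pi.single j 1) :
            Submodule ℂ (MvPolynomial (Fin d × Fin n) ℂ)) :
            Set (MvPolynomial (Fin d × Fin n) ℂ))))) = n)

/-!
Modulo the `2 × 2` minors `I_R`, a monomial with a crossing pair `α_{i,ℓ} α_{k,j}` (`i < k`,
`j < ℓ`) can be replaced by the uncrossed one `α_{i,j} α_{k,ℓ}`; this lowers the weight
`∑ (d - i) j`, keeps the multidegree and the image under `π : α_{i,j} ↦ β_j`, and ends at the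
unique staircase monomial with these data, which is `ψ_u` of the image. Hence
`x ≡ ψ_u (π x) mod I_R` for `x ∈ S_u`, while `π ∘ ψ_u = id` and `π (I_R) = 0`. So `Υ(I)_u` is
the preimage of `I_{|u|}` under the surjection `π : S_u → V_{|u|}`, which gives both the
Hilbert function and, together with `π (α_{i,j} x) = β_j π x`, the ideal property.
-/

open Finset

def prefixSum {k : ℕ} (f : Fin k → ℕ) (m : ℕ) : ℕ :=
  ∑ i ∈ univ.filter (fun i : Fin k => (i : ℕ) < m), f i

section PrefixSum

variable {k : ℕ} (f : Fin k → ℕ)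

lemma prefixSum_zero : prefixSum f 0 = 0 := by
  simp [prefixSum]

lemma prefixSum_of_le {m : ℕ} (h : k ≤ m) : prefixSum f m = ∑ i, f i := by
  rw [prefixSum, filter_true_of_mem fun i _ => i.isLt.trans_le h]

lemma prefixSum_mono : Monotone (prefixSum f) := fun _ _ h =>
  sum_le_sum_of_subset fun i => by simpa using fun hi : (i : ℕ) < _ => hi.trans_le h

lemma prefixSum_succ (i : Fin k) : prefixSum f (i + 1) = prefixSum f i + f i := by
  rw [prefixSum, prefixSum, add_comm (∑ _ ∈ _, _), ← sum_insert (by simp)]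
  congr 1
  ext j
  simp only [mem_insert, mem_filter, mem_univ, true_and, Fin.ext_iff]
  omega

end PrefixSum

/-- The summand is the length of `[x, x') ∩ [c j, c (j + 1))`; after clamping `c` to `[x, x']`
the sum telescopes. -/
lemma sum_range_min_sub_max {c : ℕ → ℕ} (hc : Monotone c) (N : ℕ) {x x' : ℕ} (hx : x ≤ x')
    (hc0 : c 0 ≤ x) (hcN : x' ≤ c N) :
    ∑ j ∈ range N, (min x' (c (j + 1)) - max x (c j)) = x' - x := by
  set clamp : ℕ → ℕ := fun t => min x' (max x t)
  have hclamp : Monotone clamp := fun _ _ h => min_le_min_left _ (max_le_max_left _ h)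
  have hterm : ∀ j, min x' (c (j + 1)) - max x (c j) = clamp (c (j + 1)) - clamp (c j) := by
    intro j
    have := hc j.le_succ
    simp only [clamp]
    omega
  calc ∑ j ∈ range N, (min x' (c (j + 1)) - max x (c j))
      = ∑ j ∈ range N, ((clamp ∘ c) (j + 1) - (clamp ∘ c) j) := sum_congr rfl fun j _ => hterm j
    _ = (clamp ∘ c) N - (clamp ∘ c) 0 := sum_range_tsub (hclamp.comp hc) N
    _ = x' - x := by simp only [Function.comp, clamp]; omega

lemma sum_overlap_prefixSum {k l : ℕ} (u : Fin k → ℕ) (g : Fin l → ℕ)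
    (hsum : ∑ i, u i = ∑ j, g j) (i : Fin k) :
    ∑ j : Fin l, (min (prefixSum u (i + 1)) (prefixSum g (j + 1)) -
      max (prefixSum u i) (prefixSum g j)) = u i := by
  rw [Fin.sum_univ_eq_sum_range (fun j => min (prefixSum u (i + 1)) (prefixSum g (j + 1)) -
      max (prefixSum u i) (prefixSum g j)),
    sum_range_min_sub_max (prefixSum_mono g) l (prefixSum_mono u (Nat.le_succ _)), prefixSum_succ]
  · omega
  · simp [prefixSum_zero]
  · rw [prefixSum_of_le g le_rfl, ← hsum, ← prefixSum_of_le u le_rfl]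
    exact prefixSum_mono u i.isLt

lemma distrib_apply (n d : ℕ) (u : Fin d → ℕ) (γ : Fin n →₀ ℕ) (p : Fin d × Fin n) :
    distrib n d u γ p = min (prefixSum u (p.1 + 1)) (prefixSum γ (p.2 + 1)) -
      max (prefixSum u p.1) (prefixSum γ p.2) := by
  simp [distrib, prefixSum]

section RowColSums

variable {n d : ℕ}

/-- The multidegree of `X^b`. -/
def rowSum (b : (Fin d × Fin n) →₀ ℕ) : Fin d → ℕ :=
  Finsupp.weight (fun p : Fin d × Fin n => (Pi.single p.1 1 : Fin d → ℕ)) b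

/-- The exponent of `π (X^b)`. -/
def colSum (b : (Fin d × Fin n) →₀ ℕ) : Fin n →₀ ℕ :=
  Finsupp.mapDomain Prod.snd b

lemma rowSum_apply (b : (Fin d × Fin n) →₀ ℕ) (i : Fin d) : rowSum b i = ∑ j, b (i, j) := by
  simp only [rowSum, Finsupp.weight_eq_sum, Fintype.sum_prod_type, Finset.sum_apply,
    Pi.smul_apply, Pi.single_apply, smul_eq_mul]
  rw [sum_comm]
  simp

lemma colSum_apply (b : (Fin d × Fin n) →₀ ℕ) (j : Fin n) : colSum b j = ∑ i, b (i, j) := by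
  rw [colSum, Finsupp.mapDomain, Finsupp.sum_apply, Finsupp.sum_fintype _ _ (by simp)]
  simp [Finsupp.single_apply, Fintype.sum_prod_type]

lemma sum_colSum (b : (Fin d × Fin n) →₀ ℕ) : ∑ j, colSum b j = ∑ i, rowSum b i := by
  simp only [colSum_apply, rowSum_apply]
  exact sum_comm

lemma rowSum_distrib {u : Fin d → ℕ} {γ : Fin n →₀ ℕ} (hsum : ∑ i, u i = ∑ j, γ j) :
    rowSum (distrib n d u γ) = u := by
  ext i
  simp only [rowSum_apply, distrib_apply]
  exact sum_overlap_prefixSum u γ hsum i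

lemma colSum_distrib {u : Fin d → ℕ} {γ : Fin n →₀ ℕ} (hsum : ∑ i, u i = ∑ j, γ j) :
    colSum (distrib n d u γ) = γ := by
  ext j
  simp only [colSum_apply, distrib_apply, min_comm (prefixSum u _), max_comm (prefixSum u _)]
  exact sum_overlap_prefixSum γ u hsum.symm j

end RowColSums

section Staircase

variable {n d : ℕ}

/-- The support of `b` lies on a monotone lattice path, as does that of `distrib n d u γ`. -/
def IsStaircase (b : (Fin d × Fin n) →₀ ℕ) : Prop :=
  ∀ p q : Fin d × Fin n, p.1 < q.1 → q.2 < p.2 → b p = 0 ∨ b q = 0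

def blockSum (b : (Fin d × Fin n) →₀ ℕ) (m m' : ℕ) : ℕ :=
  ∑ p ∈ univ.filter (fun p : Fin d × Fin n => (p.1 : ℕ) < m ∧ (p.2 : ℕ) < m'), b p

lemma blockSum_mono (b : (Fin d × Fin n) →₀ ℕ) {m₁ m₂ m₁' m₂' : ℕ} (h : m₁ ≤ m₂)
    (h' : m₁' ≤ m₂') : blockSum b m₁ m₁' ≤ blockSum b m₂ m₂' :=
  sum_le_sum_of_subset fun p => by simp only [mem_filter, mem_univ, true_and]; omega

lemma blockSum_all_cols (b : (Fin d × Fin n) →₀ ℕ) (m : ℕ) :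
    blockSum b m n = prefixSum (rowSum b) m := by
  simp only [blockSum, prefixSum, rowSum_apply, sum_filter, Fintype.sum_prod_type, Fin.is_lt,
    and_true]
  exact sum_congr rfl fun i _ => by split_ifs <;> simp

lemma blockSum_all_rows (b : (Fin d × Fin n) →₀ ℕ) (m' : ℕ) :
    blockSum b d m' = prefixSum (colSum b) m' := by
  rw [blockSum, prefixSum, sum_filter, sum_filter, Fintype.sum_prod_type, sum_comm]
  simp [colSum_apply, ← sum_filter]

lemma blockSum_corner (b : (Fin d × Fin n) →₀ ℕ) (i : Fin d) (j : Fin n) :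
    blockSum b (i + 1) (j + 1) + blockSum b i j =
      blockSum b i (j + 1) + blockSum b (i + 1) j + b (i, j) := by
  have hij : b (i, j) = ∑ p, if p = (i, j) then b p else 0 := by simp
  rw [hij]
  simp only [blockSum, sum_filter, ← sum_add_distrib]
  refine sum_congr rfl fun p _ => ?_
  simp only [Prod.ext_iff, Fin.ext_iff]
  split_ifs <;> omega

/-- The mass of a staircase in rows `< m` and columns `< m'` is either all of its mass in rows
`< m` or all of its mass in columns `< m'`, according to whether the path leaves the block
through its right or its bottom side. -/
lemma IsStaircase.blockSum_eq_min {b : (Fin d × Fin n) →₀ ℕ} (hb : IsStaircase b) (m m' : ℕ) :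
    blockSum b m m' = min (blockSum b m n) (blockSum b d m') := by
  have hrows : blockSum b m m' ≤ blockSum b m n :=
    sum_le_sum_of_subset fun p => by simp +contextual
  have hcols : blockSum b m m' ≤ blockSum b d m' :=
    sum_le_sum_of_subset fun p => by simp +contextual
  by_cases hright : ∃ p : Fin d × Fin n, (p.1 : ℕ) < m ∧ m' ≤ p.2 ∧ b p ≠ 0
  · obtain ⟨p, hp1, hp2, hp⟩ := hright
    suffices blockSum b d m' = blockSum b m m' by omega
    refine (sum_subset (fun q => by simp only [mem_filter, mem_univ, true_and]; omega) ?_).symm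
    intro q hq hq'
    simp only [mem_filter, mem_univ, true_and, not_and, not_lt] at hq hq'
    exact (hb p q (Fin.lt_def.2 (by omega)) (Fin.lt_def.2 (by omega))).resolve_left hp
  · push Not at hright
    suffices blockSum b m n = blockSum b m m' by omega
    refine (sum_subset (fun q => by simp only [mem_filter, mem_univ, true_and]; omega) ?_).symm
    intro q hq hq'
    simp only [mem_filter, mem_univ, true_and, not_and, not_lt] at hq hq'
    exact hright q hq.1 (hq' hq.1)

lemma IsStaircase.eq_distrib {b : (Fin d × Fin n) →₀ ℕ} (hb : IsStaircase b) :
    b = distrib n d (rowSum b) (colSum b) := by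
  ext ⟨i, j⟩
  rw [distrib_apply]
  dsimp only
  rw [← blockSum_all_cols, ← blockSum_all_cols, ← blockSum_all_rows, ← blockSum_all_rows]
  have hcorner := blockSum_corner b i j
  have h₀₀ := hb.blockSum_eq_min i j
  have h₁₀ := hb.blockSum_eq_min (i + 1) j
  have h₀₁ := hb.blockSum_eq_min i (j + 1)
  have h₁₁ := hb.blockSum_eq_min (i + 1) (j + 1)
  have hrows := blockSum_mono b (Nat.le_add_right i 1) (le_refl n)
  have hcols := blockSum_mono b (le_refl d) (Nat.le_add_right j 1)
  omega

end Staircase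

section Straightening

variable {n d : ℕ}

lemma exists_eq_add_of_not_isStaircase {b : (Fin d × Fin n) →₀ ℕ} (hb : ¬ IsStaircase b) :
    ∃ (c : (Fin d × Fin n) →₀ ℕ) (i k : Fin d) (j l : Fin n), i < k ∧ j < l ∧
      b = c + Finsupp.single (i, l) 1 + Finsupp.single (k, j) 1 := by
  simp only [IsStaircase, not_forall, not_or] at hb
  obtain ⟨⟨i, l⟩, ⟨k, j⟩, hik, hjl, hil, hkj⟩ := hb
  have hne : ((k, j) : Fin d × Fin n) ≠ (i, l) := by simp [hik.ne']
  have h₁ : Finsupp.single (k, j) 1 ≤ b := Finsupp.single_le_iff.2 (Nat.one_le_iff_ne_zero.2 hkj)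
  have h₂ : Finsupp.single (i, l) 1 ≤ b - Finsupp.single (k, j) 1 :=
    Finsupp.single_le_iff.2 (by simpa [Finsupp.single_apply, hne] using Nat.one_le_iff_ne_zero.2 hil)
  exact ⟨_, i, k, j, l, hik, hjl,
    by rw [tsub_add_cancel_of_le h₂, tsub_add_cancel_of_le h₁]⟩

lemma rowSum_uncross (c : (Fin d × Fin n) →₀ ℕ) (i k : Fin d) (j l : Fin n) :
    rowSum (c + Finsupp.single (i, j) 1 + Finsupp.single (k, l) 1) =
      rowSum (c + Finsupp.single (i, l) 1 + Finsupp.single (k, j) 1) := by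
  simp [rowSum, Finsupp.weight_single]

lemma colSum_uncross (c : (Fin d × Fin n) →₀ ℕ) (i k : Fin d) (j l : Fin n) :
    colSum (c + Finsupp.single (i, j) 1 + Finsupp.single (k, l) 1) =
      colSum (c + Finsupp.single (i, l) 1 + Finsupp.single (k, j) 1) := by
  simp only [colSum, Finsupp.mapDomain_add, Finsupp.mapDomain_single]
  exact add_right_comm _ _ _

def crossingWeight (d : ℕ) : ((Fin d × Fin n) →₀ ℕ) →+ ℕ :=
  Finsupp.weight fun p : Fin d × Fin n => (d - p.1) * p.2

lemma crossingWeight_uncross_lt (c : (Fin d × Fin n) →₀ ℕ) {i k : Fin d} {j l : Fin n}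
    (hik : i < k) (hjl : j < l) :
    crossingWeight d (c + Finsupp.single (i, j) 1 + Finsupp.single (k, l) 1) <
      crossingWeight d (c + Finsupp.single (i, l) 1 + Finsupp.single (k, j) 1) := by
  simp only [crossingWeight, map_add, Finsupp.weight_single, one_smul]
  have hk := k.isLt
  rw [Fin.lt_def] at hik hjl
  obtain ⟨s, hs⟩ : ∃ s, d - (i : ℕ) = d - k + s + 1 := ⟨k - i - 1, by omega⟩
  obtain ⟨t, ht⟩ : ∃ t, (l : ℕ) = j + t + 1 := ⟨l - j - 1, by omega⟩
  rw [hs, ht]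
  nlinarith

lemma monomial_uncross_sub_mem_IR (c : (Fin d × Fin n) →₀ ℕ) {i k : Fin d} {j l : Fin n}
    (hik : i < k) (hjl : j < l) :
    monomial (c + Finsupp.single (i, l) 1 + Finsupp.single (k, j) 1) (1 : ℂ) -
      monomial (c + Finsupp.single (i, j) 1 + Finsupp.single (k, l) 1) 1 ∈ IR n d := by
  have hminor : X (i, j) * X (k, l) - X (i, l) * X (k, j) ∈ IR n d :=
    Ideal.subset_span ⟨i, k, j, l, hik, hjl, rfl⟩
  convert Ideal.mul_mem_left _ (-monomial c 1) hminor using 1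
  simp only [monomial_add_single, pow_one]
  ring

theorem monomial_sub_monomial_distrib_mem_IR (b : (Fin d × Fin n) →₀ ℕ) :
    monomial b (1 : ℂ) - monomial (distrib n d (rowSum b) (colSum b)) 1 ∈ IR n d := by
  by_cases hb : IsStaircase b
  · rw [← hb.eq_distrib, sub_self]
    exact zero_mem _
  obtain ⟨c, i, k, j, l, hik, hjl, rfl⟩ := exists_eq_add_of_not_isStaircase hb
  have h := monomial_sub_monomial_distrib_mem_IR
    (c + Finsupp.single (i, j) 1 + Finsupp.single (k, l) 1)
  rw [rowSum_uncross, colSum_uncross] at h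
  simpa using add_mem (monomial_uncross_sub_mem_IR c hik hjl) h
termination_by crossingWeight d b
decreasing_by subst_vars; exact crossingWeight_uncross_lt c hik hjl

end Straightening

lemma weightedHomogeneousSubmodule_le {σ R M : Type*} [CommSemiring R] [AddCommMonoid M]
    {w : σ → M} {m : M} {P : Submodule R (MvPolynomial σ R)}
    (h : ∀ b : σ →₀ ℕ, Finsupp.weight w b = m → monomial b 1 ∈ P) :
    weightedHomogeneousSubmodule R w m ≤ P := by
  intro x hx
  rw [x.as_sum]
  refine sum_mem fun b hb => ?_
  rw [← mul_one (coeff b x), ← smul_eq_mul, ← smul_monomial]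
  exact P.smul_mem _ (h b (hx (mem_support_iff.1 hb)))

section GradedMaps

variable {n d : ℕ}

lemma Vcomp_le {N : ℕ} {P : Submodule ℂ (MvPolynomial (Fin n) ℂ)}
    (h : ∀ γ : Fin n →₀ ℕ, ∑ j, γ j = N → monomial γ 1 ∈ P) : Vcomp n N ≤ P :=
  fun f hf => weightedHomogeneousSubmodule_le (w := 1) (fun γ hγ => h γ (by
    simpa [Finsupp.weight_eq_sum] using hγ)) hf

lemma Scomp_le {u : Fin d → ℕ} {P : Submodule ℂ (MvPolynomial (Fin d × Fin n) ℂ)}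
    (h : ∀ b : (Fin d × Fin n) →₀ ℕ, rowSum b = u → monomial b 1 ∈ P) : Scomp n d u ≤ P :=
  weightedHomogeneousSubmodule_le h

lemma piL_monomial (b : (Fin d × Fin n) →₀ ℕ) (c : ℂ) :
    piL n d (monomial b c) = monomial (colSum b) c := by
  have : piAlg n d = rename Prod.snd := algHom_ext fun p => by simp [piAlg]
  rw [piL, AlgHom.toLinearMap_apply, this, rename_monomial, colSum]

lemma psi_monomial (u : Fin d → ℕ) (γ : Fin n →₀ ℕ) (c : ℂ) :
    psi n d u (monomial γ c) = monomial (distrib n d u γ) c := by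
  simp [psi, ← single_eq_monomial]

lemma psi_mem_Scomp {u : Fin d → ℕ} {f : MvPolynomial (Fin n) ℂ} (hf : f ∈ Vcomp n (∑ i, u i)) :
    psi n d u f ∈ Scomp n d u := by
  refine Vcomp_le (P := (Scomp n d u).comap (psi n d u)) (fun γ hγ => ?_) hf
  rw [mem_comap, psi_monomial]
  exact isWeightedHomogeneous_monomial _ _ _ (rowSum_distrib hγ.symm)

lemma piL_mem_Vcomp {u : Fin d → ℕ} {x : MvPolynomial (Fin d × Fin n) ℂ} (hx : x ∈ Scomp n d u) :
    piL n d x ∈ Vcomp n (∑ i, u i) := by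
  refine Scomp_le (P := (Vcomp n (∑ i, u i)).comap (piL n d)) (fun b hb => ?_) hx
  rw [mem_comap, piL_monomial]
  refine isWeightedHomogeneous_monomial _ _ _ ?_
  simp [Finsupp.weight_eq_sum, sum_colSum, hb]

lemma piL_psi {u : Fin d → ℕ} {f : MvPolynomial (Fin n) ℂ} (hf : f ∈ Vcomp n (∑ i, u i)) :
    piL n d (psi n d u f) = f := by
  have hker : Vcomp n (∑ i, u i) ≤ LinearMap.ker (piL n d ∘ₗ psi n d u - LinearMap.id) :=
    Vcomp_le fun γ hγ => by simp [psi_monomial, piL_monomial, colSum_distrib hγ.symm]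
  exact sub_eq_zero.1 (hker hf)

lemma sub_psi_piL_mem_IR {u : Fin d → ℕ} {x : MvPolynomial (Fin d × Fin n) ℂ}
    (hx : x ∈ Scomp n d u) : x - psi n d u (piL n d x) ∈ IR n d := by
  refine Scomp_le (P := (Submodule.restrictScalars ℂ (IR n d)).comap
    (LinearMap.id - psi n d u ∘ₗ piL n d)) (fun b hb => ?_) hx
  simpa [piL_monomial, psi_monomial, hb] using monomial_sub_monomial_distrib_mem_IR b

end GradedMaps

lemma finrank_quotient_comap_of_surjective {R M N : Type*} [Ring R] [AddCommGroup M]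
    [AddCommGroup N] [Module R M] [Module R N] {f : M →ₗ[R] N} (hf : Function.Surjective f)
    (p : Submodule R N) : finrank R (M ⧸ p.comap f) = finrank R (N ⧸ p) := by
  have hker : LinearMap.ker (p.mkQ ∘ₗ f) = p.comap f := by
    rw [LinearMap.ker_comp, ker_mkQ]
  rw [← hker]
  exact ((p.mkQ ∘ₗ f).quotKerEquivOfSurjective ((mkQ_surjective p).comp hf)).finrank_eq

section Upsilon

variable {n d : ℕ} (I : Ideal (MvPolynomial (Fin n) ℂ))

instance : GradedAlgebra (Scomp n d) :=
  weightedGradedAlgebra ℂ (fun p : Fin d × Fin n => (Pi.single p.1 1 : Fin d → ℕ))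

lemma IR_isHomogeneous : (IR n d).IsHomogeneous (Scomp n d) := by
  refine Ideal.homogeneous_span _ _ ?_
  rintro _ ⟨i, k, j, l, -, -, rfl⟩
  have hX : ∀ p : Fin d × Fin n, X p ∈ Scomp n d (Pi.single p.1 1) := isWeightedHomogeneous_X _ _
  exact ⟨_, sub_mem (SetLike.mul_mem_graded (hX (i, j)) (hX (k, l)))
    (SetLike.mul_mem_graded (hX (i, l)) (hX (k, j)))⟩

lemma IR_le_Upsilon : Submodule.restrictScalars ℂ (IR n d) ≤ Upsilon n d I := le_sup_left

lemma psi_mem_Upsilon {u : Fin d → ℕ} {f : MvPolynomial (Fin n) ℂ} (hfI : f ∈ I)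
    (hf : f ∈ Vcomp n (∑ i, u i)) : psi n d u f ∈ Upsilon n d I :=
  le_sup_right (a := Submodule.restrictScalars ℂ (IR n d))
    (mem_iSup_of_mem u (mem_map_of_mem ⟨hfI, hf⟩))

lemma piL_eq_zero_of_mem_IR {x : MvPolynomial (Fin d × Fin n) ℂ} (hx : x ∈ IR n d) :
    piL n d x = 0 := by
  refine (Ideal.span_le (I := RingHom.ker (piAlg n d))).2 ?_ hx
  rintro _ ⟨i, k, j, l, -, -, rfl⟩
  simp only [SetLike.mem_coe, RingHom.mem_ker, map_sub, map_mul, piAlg, aeval_X]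
  ring

lemma piL_mem_of_mem_Upsilon {x : MvPolynomial (Fin d × Fin n) ℂ} (hx : x ∈ Upsilon n d I) :
    piL n d x ∈ I := by
  have hle : Upsilon n d I ≤ (Submodule.restrictScalars ℂ I).comap (piL n d) :=
    sup_le (fun y hy => by simp [piL_eq_zero_of_mem_IR hy])
      (iSup_le fun u => map_le_iff_le_comap.2 fun f hf => by simpa [piL_psi hf.2] using hf.1)
  exact hle hx

lemma mem_Upsilon_iff {u : Fin d → ℕ} {x : MvPolynomial (Fin d × Fin n) ℂ}
    (hx : x ∈ Scomp n d u) : x ∈ Upsilon n d I ↔ piL n d x ∈ I := by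
  refine ⟨piL_mem_of_mem_Upsilon I, fun h => ?_⟩
  simpa using add_mem (IR_le_Upsilon I (sub_psi_piL_mem_IR hx))
    (psi_mem_Upsilon I h (piL_mem_Vcomp hx))

lemma Upsilon_eq_iSup_inf_Scomp : Upsilon n d I = ⨆ u, Upsilon n d I ⊓ Scomp n d u := by
  refine le_antisymm (sup_le (fun x hx => ?_) (iSup_le fun u => ?_))
    (iSup_le fun _ => inf_le_left)
  · rw [← DirectSum.sum_support_decompose (Scomp n d) x]
    exact sum_mem fun u _ => mem_iSup_of_mem u
      ⟨IR_le_Upsilon I (IR_isHomogeneous u hx), SetLike.coe_mem _⟩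
  · rintro _ ⟨f, hf, rfl⟩
    exact mem_iSup_of_mem u ⟨psi_mem_Upsilon I hf.1 hf.2, psi_mem_Scomp hf.2⟩

lemma X_mul_mem_Upsilon (q : Fin d × Fin n) {x : MvPolynomial (Fin d × Fin n) ℂ}
    (hx : x ∈ Upsilon n d I) : X q * x ∈ Upsilon n d I := by
  rw [Upsilon_eq_iSup_inf_Scomp] at hx
  refine (iSup_le fun u y hy => ?_ : _ ≤ (Upsilon n d I).comap (LinearMap.mulLeft ℂ (X q))) hx
  have hXy : X q * y ∈ Scomp n d (Pi.single q.1 1 + u) :=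
    SetLike.mul_mem_graded (isWeightedHomogeneous_X _ _ _) hy.2
  rw [mem_comap, LinearMap.mulLeft_apply, mem_Upsilon_iff I hXy, piL, AlgHom.toLinearMap_apply,
    map_mul]
  exact Ideal.mul_mem_left _ _ ((mem_Upsilon_iff I hy.2).1 hy.1)

lemma mul_mem_Upsilon (s : MvPolynomial (Fin d × Fin n) ℂ) {x : MvPolynomial (Fin d × Fin n) ℂ}
    (hx : x ∈ Upsilon n d I) : s * x ∈ Upsilon n d I := by
  induction s using MvPolynomial.induction_on generalizing x with
  | C a => rw [C_mul']; exact smul_mem _ a hx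
  | add p q hp hq => rw [add_mul]; exact add_mem (hp hx) (hq hx)
  | mul_X p q hp => rw [mul_assoc]; exact hp (X_mul_mem_Upsilon I q hx)

lemma finrank_quotient_Upsilon (u : Fin d → ℕ) :
    finrank ℂ (Scomp n d u ⧸ Submodule.comap (Scomp n d u).subtype (Upsilon n d I)) =
      finrank ℂ (Vcomp n (∑ i, u i) ⧸
        Submodule.comap (Vcomp n (∑ i, u i)).subtype (Submodule.restrictScalars ℂ I)) := by
  let pr : Scomp n d u →ₗ[ℂ] Vcomp n (∑ i, u i) := (piL n d).restrict fun _ => piL_mem_Vcomp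
  have hpr : Function.Surjective pr := fun g =>
    ⟨⟨psi n d u g, psi_mem_Scomp g.2⟩, Subtype.ext (piL_psi g.2)⟩
  have hcomap : Submodule.comap (Scomp n d u).subtype (Upsilon n d I) =
      (Submodule.comap (Vcomp n (∑ i, u i)).subtype (Submodule.restrictScalars ℂ I)).comap pr := by
    ext x
    exact mem_Upsilon_iff I x.2
  rw [hcomap, finrank_quotient_comap_of_surjective hpr]

end Upsilon

theorem stmt_5_general (n d : ℕ) (φ : ℕ → ℕ)
    (I : Ideal (MvPolynomial (Fin n) ℂ))
    (hHF : ∀ a : ℕ, finrank ℂ (Vcomp n a ⧸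
      Submodule.comap (Vcomp n a).subtype (restrictScalars ℂ I)) = φ a) :
    (∀ s x : MvPolynomial (Fin d × Fin n) ℂ,
        x ∈ Upsilon n d I → s * x ∈ Upsilon n d I) ∧
      (Upsilon n d I = ⨆ u : Fin d → ℕ, Upsilon n d I ⊓ Scomp n d u) ∧
      (∀ u : Fin d → ℕ, finrank ℂ (Scomp n d u ⧸
        Submodule.comap (Scomp n d u).subtype (Upsilon n d I)) = φ (∑ i, u i)) :=
  ⟨fun s _ hx => mul_mem_Upsilon I s hx, Upsilon_eq_iSup_inf_Scomp I,
    fun u => (finrank_quotient_Upsilon I u).trans (hHF _)⟩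

/-- Proposition 4.1: if `I ⊆ V` is a homogeneous ideal with Hilbert
function `φ`, then `Υ(I)` is a `ℤ^d`-homogeneous ideal of `S` and
`dim (S/Υ(I))_u = φ(|u|)` for all `u`. -/
theorem stmt_5 (n d : ℕ) (hn : 0 < n) (hd : 0 < d) (φ : ℕ → ℕ)
    (I : Ideal (MvPolynomial (Fin n) ℂ)) (hhom : IsHomogV n I)
    (hHF : ∀ a : ℕ, finrank ℂ (Vcomp n a ⧸
      Submodule.comap (Vcomp n a).subtype (restrictScalars ℂ I)) = φ a) :
    (∀ s x : MvPolynomial (Fin d × Fin n) ℂ,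
        x ∈ Upsilon n d I → s * x ∈ Upsilon n d I) ∧
      (Upsilon n d I = ⨆ u : Fin d → ℕ, Upsilon n d I ⊓ Scomp n d u) ∧
      (∀ u : Fin d → ℕ, finrank ℂ (Scomp n d u ⧸
        Submodule.comap (Scomp n d u).subtype (Upsilon n d I)) = φ (∑ i, u i)) :=
  stmt_5_general n d φ I hHF

end BorderComon
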